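/- arXiv:1807.09756 — 9 statements merged into one kernel-verified Lean document; each statement's English description precedes it below -/
import Mathlib

section
/- Fix a service with budget B ∈ ℝ, utility shares v : Fin M → ℝ with v j ≥ 0 for all j, bundle x : Fin M → Fin R → ℝ, multipliers λ : Fin M → Fin R → ℝ and μ ∈ ℝ, and prices p : Fin M → Fin R → ℝ. Assume: U := Σ_j v j > 0; x j r = v j * a j r for all j, r; B / U − Σ_r λ j r * a j r − μ = 0 for every j; λ j r ≤ p j r for all j, r; and λ j r = p j r whenever x j r > 0. Then for every j, the per-request price satisfies Σ_r p j r * a j r ≥ B / U − μ, and Σ_r p j r * a j r = B / U − μ whenever v j > 0; that is, the service buys only from fog nodes whose per-request price is minimal. -/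
/-- From the KKT conditions, the per-request price at each fog node satisfies
`Σ_r p j r * a j r ≥ B / U − μ`, with equality whenever `v j > 0`:
a service buys only from fog nodes whose per-request price is minimal. -/
theorem stmt_4 (M R : ℕ) (hM : 0 < M) (hR : 0 < R)
    (a : Fin M → Fin R → ℝ) (ha : ∀ j r, 0 < a j r)
    (B : ℝ) (v : Fin M → ℝ) (x : Fin M → Fin R → ℝ)
    (lam : Fin M → Fin R → ℝ) (μ : ℝ) (p : Fin M → Fin R → ℝ)
    (hv : ∀ j, 0 ≤ v j)
    (hU : 0 < ∑ j, v j)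
    (hx : ∀ j r, x j r = v j * a j r)
    (hstat : ∀ j, B / (∑ j', v j') - (∑ r, lam j r * a j r) - μ = 0)
    (hle : ∀ j r, lam j r ≤ p j r)
    (heq : ∀ j r, 0 < x j r → lam j r = p j r) :
    (∀ j, B / (∑ j', v j') - μ ≤ ∑ r, p j r * a j r) ∧
    (∀ j, 0 < v j → ∑ r, p j r * a j r = B / (∑ j', v j') - μ) := by
  have hlam : ∀ j, ∑ r, lam j r * a j r = B / (∑ j', v j') - μ := by
    intro j; have := hstat j; linarith
  constructor
  · intro j
    rw [← hlam j]
    exact Finset.sum_le_sum fun r _ =>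
      mul_le_mul_of_nonneg_right (hle j r) (ha j r).le
  · intro j hvj
    rw [← hlam j]
    refine Finset.sum_congr rfl fun r _ => ?_
    have : lam j r = p j r := by
      apply heq j r
      rw [hx j r]
      exact mul_pos hvj (ha j r)
    rw [this]
end

section
/- Let u : Fin N → Fin M → ℝ, X : Fin N → Fin M → Fin R → ℝ, λ : Fin N → Fin M → Fin R → ℝ, μ : Fin N → ℝ, γ : Fin N → Fin M → Fin R → ℝ, and p : Fin M → Fin R → ℝ satisfy, for all i, j, r: (feasibility) u i j ≥ 0, X i j r = u i j * a i j r, Σ_{j'} u i j' ≤ umax i, Σ_{i'} X i' j r ≤ 1, and U i := Σ_{j'} u i j' > 0; (stationarity) B i / U i − Σ_{r'} λ i j r' * a i j r' − μ i = 0 and λ i j r + γ i j r − p j r = 0; (complementary slackness) μ i * (umax i − U i) = 0, p j r * (1 − Σ_{i'} X i' j r) = 0, and X i j r * γ i j r = 0; (dual feasibility) μ i ≥ 0, p j r ≥ 0, γ i j r ≥ 0. Then (p, X) is a market equilibrium for the utilities u i x = min (uinf i x) (umax i): for every i, X i ∈ K i p and u i (X i) ≥ u i y for every y ∈ K i p,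 and (Σ_i X i j r − 1) * p j r = 0 for all j, r. -/
/-- The KKT conditions of the generalized Eisenberg–Gale program imply that
`(p, X)` is a market equilibrium for the truncated utilities
`u i x = min (Σ_j min_r (x j r / a i j r)) (umax i)`. -/
theorem stmt_5 (N M R : ℕ) (hN : 0 < N) (hM : 0 < M) (hR : 0 < R)
    (a : Fin N → Fin M → Fin R → ℝ) (ha : ∀ i j r, 0 < a i j r)
    (umax : Fin N → ℝ) (humax : ∀ i, 0 < umax i)
    (B : Fin N → ℝ) (hB : ∀ i, 0 < B i)
    (u : Fin N → Fin M → ℝ) (X : Fin N → Fin M → Fin R → ℝ)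
    (lam : Fin N → Fin M → Fin R → ℝ) (μ : Fin N → ℝ)
    (γ : Fin N → Fin M → Fin R → ℝ) (p : Fin M → Fin R → ℝ)
    -- primal feasibility:
    (hu_nonneg : ∀ i j, 0 ≤ u i j)
    (hX : ∀ i j r, X i j r = u i j * a i j r)
    (hlimit : ∀ i, ∑ j', u i j' ≤ umax i)
    (hcap : ∀ j r, ∑ i', X i' j r ≤ 1)
    (hUpos : ∀ i, 0 < ∑ j', u i j')
    -- stationarity:
    (hstat1 : ∀ i j, B i / (∑ j', u i j') - (∑ r', lam i j r' * a i j r') - μ i = 0)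
    (hstat2 : ∀ i j r, lam i j r + γ i j r - p j r = 0)
    -- complementary slackness:
    (hcs1 : ∀ i, μ i * (umax i - ∑ j', u i j') = 0)
    (hcs2 : ∀ j r, p j r * (1 - ∑ i', X i' j r) = 0)
    (hcs3 : ∀ i j r, X i j r * γ i j r = 0)
    -- dual feasibility:
    (hμ : ∀ i, 0 ≤ μ i) (hp : ∀ j r, 0 ≤ p j r) (hγ : ∀ i j r, 0 ≤ γ i j r) :
    -- conclusion: (p, X) is a market equilibrium for the truncated utilities
    (∀ i, (∀ j r, 0 ≤ X i j r) ∧ ∑ j, ∑ r, p j r * X i j r ≤ B i) ∧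
    (∀ i, ∀ y : Fin M → Fin R → ℝ, (∀ j r, 0 ≤ y j r) →
      (∑ j, ∑ r, p j r * y j r ≤ B i) →
      min (∑ j, ⨅ r, y j r / a i j r) (umax i) ≤
        min (∑ j, ⨅ r, X i j r / a i j r) (umax i)) ∧
    (∀ j r, ((∑ i, X i j r) - 1) * p j r = 0) := by
  have hRne : Nonempty (Fin R) := ⟨⟨0, hR⟩⟩
  have hXnn : ∀ i j r, 0 ≤ X i j r := fun i j r => by
    rw [hX]; exact mul_nonneg (hu_nonneg i j) (ha i j r).le
  -- total spending of agent i
  have hspend : ∀ i, ∑ j, ∑ r, p j r * X i j r = B i - μ i * (∑ j', u i j') := by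
    intro i
    have h1 : ∀ j, ∑ r, p j r * X i j r
        = u i j * (B i / (∑ j', u i j') - μ i) := by
      intro j
      have h2 : ∑ r, p j r * X i j r = ∑ r, lam i j r * X i j r := by
        refine Finset.sum_congr rfl fun r _ => ?_
        have h3 := hstat2 i j r
        have h4 := hcs3 i j r
        linear_combination (-(X i j r)) * h3 + h4
      rw [h2]
      have h5 := hstat1 i j
      calc ∑ r, lam i j r * X i j r
          = u i j * ∑ r', lam i j r' * a i j r' := by
            rw [Finset.mul_sum]
            refine Finset.sum_congr rfl fun r _ => ?_
            rw [hX]; ring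
        _ = u i j * (B i / (∑ j', u i j') - μ i) := by
            congr 1; linarith
    rw [Finset.sum_congr rfl fun j _ => h1 j, ← Finset.sum_mul]
    have hU := (hUpos i).ne'
    field_simp
  refine ⟨fun i => ⟨hXnn i, ?_⟩, fun i y hy hby => ?_, fun j r => ?_⟩
  · rw [hspend i]
    nlinarith [mul_nonneg (hμ i) (hUpos i).le]
  · -- optimality
    have hXinf : (∑ j, ⨅ r, X i j r / a i j r) = ∑ j', u i j' := by
      refine Finset.sum_congr rfl fun j _ => ?_
      have hc : ∀ r, X i j r / a i j r = u i j := fun r => by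
        rw [hX]; exact mul_div_cancel_right₀ (u i j) (ha i j r).ne'
      refine le_antisymm ((ciInf_le (Set.Finite.bddBelow (Set.finite_range _)) ⟨0, hR⟩).trans_eq (hc ⟨0, hR⟩)) (le_ciInf fun r => (hc r).ge)
    rw [hXinf, min_eq_left (hlimit i)]
    rcases eq_or_lt_of_le (hμ i) with hμ0 | hμ0
    · -- μ i = 0
      have hBU : 0 < B i / (∑ j', u i j') := div_pos (hB i) (hUpos i)
      have hbound : ∀ j, (⨅ r, y j r / a i j r) * (B i / (∑ j', u i j'))
          ≤ ∑ r, p j r * y j r := by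
        intro j
        have hla : ∑ r', lam i j r' * a i j r' = B i / (∑ j', u i j') := by
          have := hstat1 i j; linarith
        have htn : 0 ≤ ⨅ r, y j r / a i j r :=
          le_ciInf fun r => div_nonneg (hy j r) (ha i j r).le
        calc (⨅ r, y j r / a i j r) * (B i / (∑ j', u i j'))
            = ∑ r, (⨅ r', y j r' / a i j r') * (lam i j r * a i j r) := by
              rw [← Finset.mul_sum, hla]
          _ ≤ ∑ r, p j r * y j r := by
              refine Finset.sum_le_sum fun r _ => ?_
              have h1 : (⨅ r', y j r' / a i j r') ≤ y j r / a i j r :=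
                ciInf_le (Set.Finite.bddBelow (Set.finite_range _)) r
              have h2 : (⨅ r', y j r' / a i j r') * a i j r ≤ y j r :=
                (le_div_iff₀ (ha i j r)).mp h1
              have h3 := hstat2 i j r
              have h5 : (⨅ r', y j r' / a i j r') * a i j r *
                  (lam i j r + γ i j r - p j r) = 0 := by rw [h3]; ring
              nlinarith [mul_nonneg (hp j r) (sub_nonneg.mpr h2),
                mul_nonneg (mul_nonneg htn (ha i j r).le) (hγ i j r), h5]
      have hsum : (∑ j, ⨅ r, y j r / a i j r) * (B i / (∑ j', u i j')) ≤ B i := by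
        rw [Finset.sum_mul]
        calc ∑ j, (⨅ r, y j r / a i j r) * (B i / (∑ j', u i j'))
            ≤ ∑ j, ∑ r, p j r * y j r := Finset.sum_le_sum fun j _ => hbound j
          _ ≤ B i := hby
      have hle : (∑ j, ⨅ r, y j r / a i j r) ≤ ∑ j', u i j' := by
        have hU0 : (∑ j', u i j') ≠ 0 := (hUpos i).ne'
        have hq : (∑ j', u i j') * (B i / (∑ j', u i j')) = B i := by
          rw [mul_comm]; exact div_mul_cancel₀ (B i) hU0
        exact le_of_mul_le_mul_right (hsum.trans_eq hq.symm) hBU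
      exact min_le_of_left_le hle
    · -- μ i > 0
      have h := hcs1 i
      have hUmax : umax i = ∑ j', u i j' := by
        rcases mul_eq_zero.mp h with h' | h'
        · exact absurd h' (ne_of_gt hμ0)
        · linarith
      calc min (∑ j, ⨅ r, y j r / a i j r) (umax i) ≤ umax i := min_le_right _ _
        _ = _ := hUmax
  · linear_combination (-1 : ℝ) * hcs2 j r
end

section
/- Suppose (X, u) and (X', u') both lie in the feasible set F of the generalized Eisenberg–Gale program, satisfy Σ_j u i j > 0 and Σ_j u' i j > 0 for all i, and both maximize the objective Σ_i B i * ln (Σ_j u i j) over all members of F whose row sums Σ_j u i j are all positive. Then Σ_j u i j = Σ_j u' i j for every i; that is, the equilibrium utility of every service is unique across all optimal solutions. -/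
/-- The feasible set of the generalized Eisenberg–Gale program. -/
def EGFeasible {N M R : ℕ} (a : Fin N → Fin M → Fin R → ℝ) (umax : Fin N → ℝ)
    (X : Fin N → Fin M → Fin R → ℝ) (u : Fin N → Fin M → ℝ) : Prop :=
  (∀ i j, 0 ≤ u i j) ∧ (∀ i j r, X i j r = u i j * a i j r) ∧
  (∀ i, ∑ j, u i j ≤ umax i) ∧ (∀ j r, ∑ i, X i j r ≤ 1)

lemma log_mid_gt {s t : ℝ} (hs : 0 < s) (ht : 0 < t) (hne : s ≠ t) :
    (Real.log s + Real.log t) / 2 < Real.log ((s + t) / 2) := by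
  have := strictConcaveOn_log_Ioi.2 (Set.mem_Ioi.mpr hs) (Set.mem_Ioi.mpr ht) hne
    (by norm_num : (0:ℝ) < 1/2) (by norm_num : (0:ℝ) < 1/2) (by norm_num)
  calc (Real.log s + Real.log t) / 2
      = (1/2 : ℝ) • Real.log s + (1/2 : ℝ) • Real.log t := by ring_nf
    _ < Real.log ((1/2 : ℝ) • s + (1/2 : ℝ) • t) := this
    _ = Real.log ((s + t) / 2) := by norm_num [smul_eq_mul]; ring_nf

lemma log_mid_ge {s t : ℝ} (hs : 0 < s) (ht : 0 < t) :
    (Real.log s + Real.log t) / 2 ≤ Real.log ((s + t) / 2) := by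
  rcases eq_or_ne s t with h | h
  · subst h; rw [show (s + s) / 2 = s by ring]; linarith
  · exact (log_mid_gt hs ht h).le

/-- The equilibrium utility of every service is unique across all optimal solutions
of the generalized Eisenberg–Gale program. -/
theorem stmt_6 (N M R : ℕ) (hN : 0 < N) (hM : 0 < M) (hR : 0 < R)
    (a : Fin N → Fin M → Fin R → ℝ) (ha : ∀ i j r, 0 < a i j r)
    (B : Fin N → ℝ) (hB : ∀ i, 0 < B i)
    (umax : Fin N → ℝ) (humax : ∀ i, 0 < umax i)
    (X X' : Fin N → Fin M → Fin R → ℝ) (u u' : Fin N → Fin M → ℝ)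
    (hfeas : EGFeasible a umax X u) (hfeas' : EGFeasible a umax X' u')
    (hpos : ∀ i, 0 < ∑ j, u i j) (hpos' : ∀ i, 0 < ∑ j, u' i j)
    (hopt : ∀ (Y : Fin N → Fin M → Fin R → ℝ) (w : Fin N → Fin M → ℝ),
      EGFeasible a umax Y w → (∀ i, 0 < ∑ j, w i j) →
      ∑ i, B i * Real.log (∑ j, w i j) ≤ ∑ i, B i * Real.log (∑ j, u i j))
    (hopt' : ∀ (Y : Fin N → Fin M → Fin R → ℝ) (w : Fin N → Fin M → ℝ),
      EGFeasible a umax Y w → (∀ i, 0 < ∑ j, w i j) →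
      ∑ i, B i * Real.log (∑ j, w i j) ≤ ∑ i, B i * Real.log (∑ j, u' i j)) :
    ∀ i, ∑ j, u i j = ∑ j, u' i j := by
  obtain ⟨h1, h2, h3, h4⟩ := hfeas
  obtain ⟨h1', h2', h3', h4'⟩ := hfeas'
  -- equal optimal values
  have hVV' : ∑ i, B i * Real.log (∑ j, u i j) = ∑ i, B i * Real.log (∑ j, u' i j) :=
    le_antisymm (hopt' X u ⟨h1, h2, h3, h4⟩ hpos) (hopt X' u' ⟨h1', h2', h3', h4'⟩ hpos')
  -- midpoint
  set w : Fin N → Fin M → ℝ := fun i j => (u i j + u' i j) / 2 with hw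
  set Y : Fin N → Fin M → Fin R → ℝ := fun i j r => w i j * a i j r with hY
  have hwsum : ∀ i, ∑ j, w i j = ((∑ j, u i j) + (∑ j, u' i j)) / 2 := by
    intro i
    simp only [hw]
    rw [← Finset.sum_div, Finset.sum_add_distrib]
  have hwfeas : EGFeasible a umax Y w := by
    refine ⟨fun i j => by have := h1 i j; have := h1' i j; simp only [hw]; linarith,
      fun i j r => rfl, ?_, ?_⟩
    · intro i
      rw [hwsum i]
      have := h3 i; have := h3' i
      linarith
    · intro j r
      have : ∀ i, Y i j r = (X i j r + X' i j r) / 2 := by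
        intro i; simp only [hY, hw, h2 i j r, h2' i j r]; ring
      calc ∑ i, Y i j r = ∑ i, (X i j r + X' i j r) / 2 := by
            exact Finset.sum_congr rfl fun i _ => this i
        _ = ((∑ i, X i j r) + ∑ i, X' i j r) / 2 := by
            rw [← Finset.sum_div, Finset.sum_add_distrib]
        _ ≤ 1 := by have := h4 j r; have := h4' j r; linarith
  have hwpos : ∀ i, 0 < ∑ j, w i j := by
    intro i; rw [hwsum i]; have := hpos i; have := hpos' i; linarith
  -- key: if some i has different sums, strict improvement
  intro i
  by_contra hne
  have hterm_ge : ∀ k ∈ Finset.univ, B k * ((Real.log (∑ j, u k j) + Real.log (∑ j, u' k j)) / 2)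
      ≤ B k * Real.log (∑ j, w k j) := by
    intro k _
    rw [hwsum k]
    exact mul_le_mul_of_nonneg_left (log_mid_ge (hpos k) (hpos' k)) (hB k).le
  have hterm_gt : B i * ((Real.log (∑ j, u i j) + Real.log (∑ j, u' i j)) / 2)
      < B i * Real.log (∑ j, w i j) := by
    rw [hwsum i]
    exact mul_lt_mul_of_pos_left (log_mid_gt (hpos i) (hpos' i) hne) (hB i)
  have hstrict : ∑ k, B k * ((Real.log (∑ j, u k j) + Real.log (∑ j, u' k j)) / 2)
      < ∑ k, B k * Real.log (∑ j, w k j) :=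
    Finset.sum_lt_sum hterm_ge ⟨i, Finset.mem_univ i, hterm_gt⟩
  have hlhs : ∑ k, B k * ((Real.log (∑ j, u k j) + Real.log (∑ j, u' k j)) / 2)
      = ∑ k, B k * Real.log (∑ j, u k j) := by
    have : ∑ k, B k * ((Real.log (∑ j, u k j) + Real.log (∑ j, u' k j)) / 2)
        = ((∑ k, B k * Real.log (∑ j, u k j)) + ∑ k, B k * Real.log (∑ j, u' k j)) / 2 := by
      rw [← Finset.sum_add_distrib, Finset.sum_div]
      exact Finset.sum_congr rfl fun k _ => by ring
    rw [this, ← hVV']; ring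
  rw [hlhs] at hstrict
  exact absurd (hopt Y w hwfeas hwpos) (not_le.mpr hstrict)
end

section
/- The generalized Eisenberg–Gale program attains its maximum: there exists (X*, u*) ∈ F with Σ_j u* i j > 0 for all i such that for every (X, u) ∈ F with Σ_j u i j > 0 for all i, Σ_i B i * ln (Σ_j u i j) ≤ Σ_i B i * ln (Σ_j u* i j). -/
/-- The generalized Eisenberg–Gale program attains its maximum. -/
theorem stmt_7 (N M R : ℕ) (hN : 0 < N) (hM : 0 < M) (hR : 0 < R)
    (a : Fin N → Fin M → Fin R → ℝ) (ha : ∀ i j r, 0 < a i j r)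
    (B : Fin N → ℝ) (hB : ∀ i, 0 < B i)
    (umax : Fin N → ℝ) (humax : ∀ i, 0 < umax i) :
    ∃ (Xs : Fin N → Fin M → Fin R → ℝ) (us : Fin N → Fin M → ℝ),
      EGFeasible a umax Xs us ∧ (∀ i, 0 < ∑ j, us i j) ∧
      ∀ (X : Fin N → Fin M → Fin R → ℝ) (u : Fin N → Fin M → ℝ),
        EGFeasible a umax X u → (∀ i, 0 < ∑ j, u i j) →
        ∑ i, B i * Real.log (∑ j, u i j) ≤ ∑ i, B i * Real.log (∑ j, us i j) := by
  haveI : Nonempty (Fin N) := Fin.pos_iff_nonempty.mp hN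
  -- The feasible set in terms of u alone
  set K : Set (Fin N → Fin M → ℝ) :=
    {u | (∀ i j, 0 ≤ u i j) ∧ (∀ i, ∑ j, u i j ≤ umax i) ∧
      (∀ j r, ∑ i, u i j * a i j r ≤ 1)} with hKdef
  have hcontij : ∀ (i : Fin N) (j : Fin M),
      Continuous fun u : Fin N → Fin M → ℝ => u i j :=
    fun i j => (continuous_apply j).comp (continuous_apply i)
  have hKclosed : IsClosed K := by
    have h1 : IsClosed {u : Fin N → Fin M → ℝ | ∀ i j, 0 ≤ u i j} := by
      have : {u : Fin N → Fin M → ℝ | ∀ i j, 0 ≤ u i j}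
          = ⋂ i, ⋂ j, {u | 0 ≤ u i j} := by ext u; simp
      rw [this]
      exact isClosed_iInter fun i => isClosed_iInter fun j =>
        isClosed_le continuous_const (hcontij i j)
    have h2 : IsClosed {u : Fin N → Fin M → ℝ | ∀ i, ∑ j, u i j ≤ umax i} := by
      have : {u : Fin N → Fin M → ℝ | ∀ i, ∑ j, u i j ≤ umax i}
          = ⋂ i, {u | ∑ j, u i j ≤ umax i} := by ext u; simp
      rw [this]
      exact isClosed_iInter fun i =>
        isClosed_le (continuous_finset_sum _ fun j _ => hcontij i j) continuous_const
    have h3 : IsClosed {u : Fin N → Fin M → ℝ | ∀ j r, ∑ i, u i j * a i j r ≤ 1} := by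
      have : {u : Fin N → Fin M → ℝ | ∀ j r, ∑ i, u i j * a i j r ≤ 1}
          = ⋂ j, ⋂ r, {u | ∑ i, u i j * a i j r ≤ 1} := by ext u; simp
      rw [this]
      exact isClosed_iInter fun j => isClosed_iInter fun r =>
        isClosed_le (continuous_finset_sum _ fun i _ => (hcontij i j).mul continuous_const)
          continuous_const
    have : K = {u : Fin N → Fin M → ℝ | ∀ i j, 0 ≤ u i j}
        ∩ ({u | ∀ i, ∑ j, u i j ≤ umax i} ∩ {u | ∀ j r, ∑ i, u i j * a i j r ≤ 1}) := by
      ext u; simp [hKdef, and_assoc]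
    rw [this]
    exact h1.inter (h2.inter h3)
  have hKcomp : IsCompact K := by
    have hT : IsCompact (Set.univ.pi fun i : Fin N =>
        (Set.univ.pi fun _ : Fin M => Set.Icc (0:ℝ) (umax i)) ) :=
      isCompact_univ_pi fun i => isCompact_univ_pi fun _ => isCompact_Icc
    refine hT.of_isClosed_subset hKclosed ?_
    intro u hu
    intro i _ ; intro j _
    refine ⟨hu.1 i j, le_trans ?_ (hu.2.1 i)⟩
    exact Finset.single_le_sum (fun j' _ => hu.1 i j') (Finset.mem_univ j)
  -- an interior-ish point
  set m : ℝ := Finset.univ.inf' Finset.univ_nonempty umax with hmdef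
  have hm : 0 < m := (Finset.lt_inf'_iff _).2 fun i _ => humax i
  set A : ℝ := ∑ i, ∑ j, ∑ r, a i j r with hAdef
  have hA0 : 0 ≤ A :=
    Finset.sum_nonneg fun i _ => Finset.sum_nonneg fun j _ =>
      Finset.sum_nonneg fun r _ => (ha i j r).le
  set δ : ℝ := min (m / M) (1 / (1 + A)) with hδdef
  have hδ : 0 < δ := by
    apply lt_min
    · positivity
    · positivity
  have hsumδ : ∀ i : Fin N, ∑ _j : Fin M, δ = M * δ := by
    intro i; simp [Finset.sum_const, Finset.card_univ, mul_comm]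
  have hu0K : (fun (_ : Fin N) (_ : Fin M) => δ) ∈ K := by
    refine ⟨fun i j => hδ.le, ?_, ?_⟩
    · intro i
      rw [hsumδ i]
      have h1 : (M:ℝ) * δ ≤ (M:ℝ) * (m / M) :=
        mul_le_mul_of_nonneg_left (min_le_left _ _) (by positivity)
      have h2 : (M:ℝ) * (m / M) = m := by
        field_simp
      have h3 : m ≤ umax i := Finset.inf'_le _ (Finset.mem_univ i)
      linarith
    · intro j r
      have hS0 : 0 ≤ ∑ i, a i j r := Finset.sum_nonneg fun i _ => (ha i j r).le
      have hSA : ∑ i, a i j r ≤ A := by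
        refine Finset.sum_le_sum fun i _ => ?_
        calc a i j r ≤ ∑ r', a i j r' :=
              Finset.single_le_sum (fun r' _ => (ha i j r').le) (Finset.mem_univ r)
          _ ≤ ∑ j', ∑ r', a i j' r' :=
              Finset.single_le_sum (fun j' _ => Finset.sum_nonneg fun r' _ => (ha i j' r').le)
                (Finset.mem_univ j)
      calc ∑ i, δ * a i j r = δ * ∑ i, a i j r := by rw [Finset.mul_sum]
        _ ≤ (1 / (1 + A)) * ∑ i, a i j r :=
            mul_le_mul_of_nonneg_right (min_le_right _ _) hS0
        _ ≤ (1 / (1 + A)) * A := mul_le_mul_of_nonneg_left hSA (by positivity)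
        _ ≤ 1 := by
            rw [div_mul_eq_mul_div, one_mul]
            exact div_le_one_of_le₀ (by linarith) (by positivity)
  have hu0pos : ∀ i : Fin N, 0 < ∑ _j : Fin M, δ := by
    intro i; rw [hsumδ i]; positivity
  -- the product objective
  set G : (Fin N → Fin M → ℝ) → ℝ := fun u => ∏ i, (∑ j, u i j) ^ (B i) with hGdef
  have hGcont : Continuous G := by
    apply continuous_finset_prod
    intro i _
    have h1 : Continuous fun u : Fin N → Fin M → ℝ => ∑ j, u i j :=
      continuous_finset_sum _ fun j _ => hcontij i j
    have h2 : Continuous fun x : ℝ => x ^ (B i) :=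
      continuous_iff_continuousAt.2 fun x =>
        Real.continuousAt_rpow_const x (B i) (Or.inr (hB i).le)
    exact h2.comp h1
  obtain ⟨us, husK, hmax⟩ :=
    hKcomp.exists_isMaxOn ⟨_, hu0K⟩ hGcont.continuousOn
  have hGu0pos : 0 < G (fun _ _ => δ) :=
    Finset.prod_pos fun i _ => Real.rpow_pos_of_pos (hu0pos i) _
  have hpos : ∀ i, 0 < ∑ j, us i j := by
    intro i
    by_contra h
    push_neg at h
    have hz : ∑ j, us i j = 0 :=
      le_antisymm h (Finset.sum_nonneg fun j _ => husK.1 i j)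
    have hGz : G us = 0 :=
      Finset.prod_eq_zero (Finset.mem_univ i)
        (by rw [hz]; exact Real.zero_rpow (ne_of_gt (hB i)))
    have h2 : G (fun _ _ => δ) ≤ G us := hmax hu0K
    rw [hGz] at h2
    linarith
  have key : ∀ u : Fin N → Fin M → ℝ, (∀ i, 0 < ∑ j, u i j) →
      ∑ i, B i * Real.log (∑ j, u i j) = Real.log (G u) := by
    intro u hu
    rw [hGdef]
    rw [Real.log_prod (fun i _ => ne_of_gt (Real.rpow_pos_of_pos (hu i) _))]
    exact Finset.sum_congr rfl fun i _ => (Real.log_rpow (hu i) (B i)).symm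
  refine ⟨fun i j r => us i j * a i j r, us,
    ⟨husK.1, fun _ _ _ => rfl, husK.2.1, husK.2.2⟩, hpos, ?_⟩
  intro X u hfeas hupos
  have huK : u ∈ K := by
    refine ⟨hfeas.1, hfeas.2.2.1, fun j r => ?_⟩
    have := hfeas.2.2.2 j r
    calc ∑ i, u i j * a i j r = ∑ i, X i j r :=
          Finset.sum_congr rfl fun i _ => (hfeas.2.1 i j r).symm
      _ ≤ 1 := this
  rw [key u hupos, key us hpos]
  have hGupos : 0 < G u :=
    Finset.prod_pos fun i _ => Real.rpow_pos_of_pos (hupos i) _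
  exact Real.log_le_log hGupos (hmax huK)
end

section
/- Let (p, X) be a market equilibrium for the utilities u i x = min (uinf i x) (umax i) such that Σ_i X i j r ≤ 1 for all j, r, X is non-wasteful, X is frugal at p, and Σ_j v i j > 0 for all i, where v i j = min_r (X i j r / a i j r). Then (X, v) is an optimal solution of the generalized Eisenberg–Gale program: (X, v) ∈ F, and for every (X', u') ∈ F with Σ_j u' i j > 0 for all i, Σ_i B i * ln (Σ_j u' i j) ≤ Σ_i B i * ln (Σ_j v i j). -/
/-- Every non-wasteful and frugal market equilibrium (for the truncated utilities
`u i x = min (Σ_j min_r (x j r / a i j r)) (umax i)`) is an optimal solution of the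
generalized Eisenberg–Gale program. -/
theorem stmt_8 (N M R : ℕ) (hN : 0 < N) (hM : 0 < M) (hR : 0 < R)
    (a : Fin N → Fin M → Fin R → ℝ) (ha : ∀ i j r, 0 < a i j r)
    (umax : Fin N → ℝ) (humax : ∀ i, 0 < umax i)
    (B : Fin N → ℝ) (hB : ∀ i, 0 < B i)
    (p : Fin M → Fin R → ℝ) (hp : ∀ j r, 0 ≤ p j r)
    (X : Fin N → Fin M → Fin R → ℝ)
    (v : Fin N → Fin M → ℝ) (hv : ∀ i j, v i j = ⨅ r, X i j r / a i j r)
    -- (p, X) is a market equilibrium for the truncated utilities: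
    (hXK : ∀ i, (∀ j r, 0 ≤ X i j r) ∧ ∑ j, ∑ r, p j r * X i j r ≤ B i)
    (hXopt : ∀ i, ∀ y : Fin M → Fin R → ℝ, (∀ j r, 0 ≤ y j r) →
      (∑ j, ∑ r, p j r * y j r ≤ B i) →
      min (∑ j, ⨅ r, y j r / a i j r) (umax i) ≤
        min (∑ j, ⨅ r, X i j r / a i j r) (umax i))
    (hclear : ∀ j r, ((∑ i, X i j r) - 1) * p j r = 0)
    -- capacity constraints:
    (hcap : ∀ j r, ∑ i, X i j r ≤ 1)
    -- X is non-wasteful: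
    (hnw1 : ∀ i j r, X i j r = v i j * a i j r)
    (hnw2 : ∀ i, ∑ j, v i j ≤ umax i)
    -- X is frugal at p:
    (hfrugal : ∀ i j, 0 < v i j →
      ∑ r, p j r * a i j r = ⨅ j', ∑ r, p j' r * a i j' r)
    -- every service has positive utility:
    (hpos : ∀ i, 0 < ∑ j, v i j) :
    -- (X, v) is an optimal solution of the generalized Eisenberg–Gale program:
    EGFeasible a umax X v ∧
    ∀ (X' : Fin N → Fin M → Fin R → ℝ) (u' : Fin N → Fin M → ℝ),
      EGFeasible a umax X' u' → (∀ i, 0 < ∑ j, u' i j) →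
      ∑ i, B i * Real.log (∑ j, u' i j) ≤ ∑ i, B i * Real.log (∑ j, v i j) := by

  haveI hRne : Nonempty (Fin R) := ⟨⟨0, hR⟩⟩
  haveI hMne : Nonempty (Fin M) := ⟨⟨0, hM⟩⟩
  -- v is nonnegative
  have hv0 : ∀ i j, 0 ≤ v i j := by
    intro i j
    rw [hv]
    exact le_ciInf fun r => div_nonneg ((hXK i).1 j r) (ha i j r).le
  -- infimum of X/a is v
  have hvinf : ∀ i (j : Fin M), (⨅ r, X i j r / a i j r) = v i j := fun i j => (hv i j).symm
  -- per-node per-unit cost and minimal cost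
  set c : Fin N → Fin M → ℝ := fun i j => ∑ r, p j r * a i j r with hc_def
  set q : Fin N → ℝ := fun i => ⨅ j', c i j' with hq_def
  have hc0 : ∀ i j, 0 ≤ c i j := fun i j =>
    Finset.sum_nonneg fun r _ => mul_nonneg (hp j r) (ha i j r).le
  have hq_le : ∀ i j, q i ≤ c i j := fun i j => ciInf_le (Finite.bddBelow_range _) j
  have hq0 : ∀ i, 0 ≤ q i := fun i => le_ciInf (fun j => hc0 i j)
  -- spending of service i equals q i * (total utility)
  have hs : ∀ i, ∑ j, ∑ r, p j r * X i j r = q i * ∑ j, v i j := by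
    intro i
    have h1 : ∀ j : Fin M, ∑ r, p j r * X i j r = v i j * c i j := by
      intro j
      rw [hc_def, Finset.mul_sum]
      refine Finset.sum_congr rfl fun r _ => by rw [hnw1 i j r]; ring
    rw [Finset.mul_sum]
    refine Finset.sum_congr rfl fun j _ => ?_
    rw [h1 j]
    rcases eq_or_lt_of_le (hv0 i j) with h | h
    · rw [← h]; ring
    · rw [show c i j = q i from hfrugal i j h]; ring
  -- budget constraint
  have hbudget : ∀ i, q i * (∑ j, v i j) ≤ B i := fun i => hs i ▸ (hXK i).2
  -- saturation: unsaturated utility means full budget spent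
  have hsat : ∀ i, (∑ j, v i j) < umax i → B i ≤ q i * ∑ j, v i j := by
    intro i hlt
    by_contra hcon
    push_neg at hcon
    obtain ⟨j0, hj0⟩ : ∃ j0, c i j0 = ⨅ j', c i j' := exists_eq_ciInf_of_finite
    set t := (B i - q i * ∑ j, v i j) / (q i + 1) with ht_def
    have hq1 : (0:ℝ) < q i + 1 := by linarith [hq0 i]
    have ht : 0 < t := div_pos (by linarith) hq1
    have htq : t * (q i + 1) = B i - q i * ∑ j, v i j := by
      rw [ht_def, div_mul_cancel₀ _ hq1.ne']
    set y : Fin M → Fin R → ℝ := fun j r => X i j r + if j = j0 then t * a i j0 r else 0 with hy_def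
    have hy0 : ∀ j r, 0 ≤ y j r := by
      intro j r
      by_cases h : j = j0
      · subst h
        have h1 := (hXK i).1 j r
        have h2 : 0 ≤ t * a i j r := mul_nonneg ht.le (ha i j r).le
        have hyv : y j r = X i j r + t * a i j r := by simp [hy_def]
        rw [hyv]
        linarith
      · simpa [hy_def, h] using (hXK i).1 j r
    have hycost : ∑ j, ∑ r, p j r * y j r ≤ B i := by
      have hexp : ∑ j, ∑ r, p j r * y j r
          = (∑ j, ∑ r, p j r * X i j r) + t * c i j0 := by
        have hpt : ∀ j : Fin M, ∑ r, p j r * y j r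
            = (∑ r, p j r * X i j r) + (if j = j0 then t * c i j0 else 0) := by
          intro j
          by_cases h : j = j0
          · subst h
            rw [if_pos rfl]
            have hyv : ∀ r : Fin R, y j r = X i j r + t * a i j r := fun r => by
              simp [hy_def]
            calc ∑ r, p j r * y j r
                = ∑ r, (p j r * X i j r + t * (p j r * a i j r)) :=
                  Finset.sum_congr rfl fun r _ => by rw [hyv r]; ring
              _ = (∑ r, p j r * X i j r) + ∑ r, t * (p j r * a i j r) :=
                  Finset.sum_add_distrib
              _ = (∑ r, p j r * X i j r) + t * c i j := by
                  rw [← Finset.mul_sum]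
          · simp [hy_def, h]
        rw [Finset.sum_congr rfl fun j _ => hpt j, Finset.sum_add_distrib,
          Finset.sum_ite_eq' Finset.univ j0 (fun _ => t * c i j0)]
        simp
      have hj0' : c i j0 = q i := hj0
      rw [hexp, hs i, hj0']
      nlinarith [hq0 i]
    have hyinf : ∀ j : Fin M, (⨅ r, y j r / a i j r) = v i j + (if j = j0 then t else 0) := by
      intro j
      by_cases h : j = j0
      · subst h
        rw [if_pos rfl]
        have heach : ∀ r : Fin R, y j r / a i j r = v i j + t := by
          intro r
          have hyv : y j r = X i j r + t * a i j r := by simp [hy_def]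
          have ha' := (ha i j r).ne'
          rw [hyv, hnw1 i j r]
          field_simp
        rw [iInf_congr heach, ciInf_const]
      · simp only [if_neg h, add_zero]
        rw [← hvinf i j]
        refine iInf_congr fun r => ?_
        simp [hy_def, h]
    have hyutil : ∑ j, ⨅ r, y j r / a i j r = (∑ j, v i j) + t := by
      rw [Finset.sum_congr rfl fun j _ => hyinf j, Finset.sum_add_distrib,
        Finset.sum_ite_eq' Finset.univ j0 (fun _ => t)]
      simp
    have hXinf : ∑ j, ⨅ r, X i j r / a i j r = ∑ j, v i j :=
      Finset.sum_congr rfl fun j _ => hvinf i j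
    have := hXopt i y hy0 hycost
    rw [hyutil, hXinf, min_eq_left (hnw2 i)] at this
    have h1 : ∑ j, v i j < min ((∑ j, v i j) + t) (umax i) := lt_min (by linarith) hlt
    linarith
  -- feasibility of (X, v)
  refine ⟨⟨hv0, hnw1, hnw2, hcap⟩, ?_⟩
  rintro X' u' ⟨hu'0, hX'u, hu'max, hX'cap⟩ hU'
  -- abbreviations
  -- key per-service inequality
  have key : ∀ i, B i * Real.log (∑ j, u' i j) - B i * Real.log (∑ j, v i j)
      ≤ q i * (∑ j, u' i j) - q i * (∑ j, v i j) := by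
    intro i
    set U := ∑ j, v i j with hU_def
    set U' := ∑ j, u' i j with hU'_def
    have hUp : 0 < U := hpos i
    have hU'p : 0 < U' := hU' i
    have hlog : B i * Real.log U' - B i * Real.log U ≤ B i / U * (U' - U) := by
      have h1 : Real.log (U' / U) ≤ U' / U - 1 := Real.log_le_sub_one_of_pos (by positivity)
      rw [Real.log_div hU'p.ne' hUp.ne'] at h1
      have h2 : Real.log U' - Real.log U ≤ (U' - U) / U := by
        rw [sub_div, div_self hUp.ne']
        linarith
      calc B i * Real.log U' - B i * Real.log U = B i * (Real.log U' - Real.log U) := by ring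
        _ ≤ B i * ((U' - U) / U) := by
            exact mul_le_mul_of_nonneg_left h2 (hB i).le
        _ = B i / U * (U' - U) := by ring
    refine hlog.trans ?_
    rcases le_or_gt U' U with hle | hlt
    · have hqB : q i ≤ B i / U := by
        rw [le_div_iff₀ hUp]
        linarith [hbudget i]
      have : B i / U * (U' - U) ≤ q i * (U' - U) :=
        mul_le_mul_of_nonpos_right hqB (by linarith)
      linarith
    · have hUmax : U < umax i := lt_of_lt_of_le hlt (hu'max i)
      have hBeq : B i = q i * U := le_antisymm (hsat i hUmax) (hbudget i)
      rw [show B i / U = q i by rw [hBeq]; field_simp]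
      linarith
  -- summing the spending inequality
  have h2 : ∑ i, q i * (∑ j, u' i j) ≤ ∑ i, q i * (∑ j, v i j) := by
    have step1 : ∀ i, q i * (∑ j, u' i j) ≤ ∑ j, ∑ r, p j r * X' i j r := by
      intro i
      have h1 : ∀ j : Fin M, ∑ r, p j r * X' i j r = u' i j * c i j := by
        intro j
        rw [hc_def, Finset.mul_sum]
        refine Finset.sum_congr rfl fun r _ => by rw [hX'u i j r]; ring
      calc q i * (∑ j, u' i j) = ∑ j, u' i j * q i := by
            rw [Finset.mul_sum]; exact Finset.sum_congr rfl fun j _ => mul_comm _ _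
        _ ≤ ∑ j, u' i j * c i j :=
            Finset.sum_le_sum fun j _ => mul_le_mul_of_nonneg_left (hq_le i j) (hu'0 i j)
        _ = ∑ j, ∑ r, p j r * X' i j r := (Finset.sum_congr rfl fun j _ => (h1 j).symm)
    have step2 : ∑ i, ∑ j, ∑ r, p j r * X' i j r ≤ ∑ j, ∑ r, p j r := by
      rw [Finset.sum_comm]
      refine Finset.sum_le_sum fun j _ => ?_
      rw [Finset.sum_comm]
      refine Finset.sum_le_sum fun r _ => ?_
      rw [← Finset.mul_sum]
      calc p j r * ∑ i, X' i j r ≤ p j r * 1 :=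
            mul_le_mul_of_nonneg_left (hX'cap j r) (hp j r)
        _ = p j r := mul_one _
    have step3 : ∑ j, ∑ r, p j r = ∑ i, ∑ j, ∑ r, p j r * X i j r := by
      have h1 : ∀ (j : Fin M) (r : Fin R), p j r = ∑ i, p j r * X i j r := by
        intro j r
        rw [← Finset.mul_sum]
        nlinarith [hclear j r]
      calc ∑ j, ∑ r, p j r = ∑ j, ∑ r, ∑ i, p j r * X i j r :=
            Finset.sum_congr rfl fun j _ => Finset.sum_congr rfl fun r _ => h1 j r
        _ = ∑ j, ∑ i, ∑ r, p j r * X i j r :=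
            Finset.sum_congr rfl fun j _ => Finset.sum_comm
        _ = ∑ i, ∑ j, ∑ r, p j r * X i j r := Finset.sum_comm
    calc ∑ i, q i * (∑ j, u' i j) ≤ ∑ i, ∑ j, ∑ r, p j r * X' i j r :=
          Finset.sum_le_sum fun i _ => step1 i
      _ ≤ ∑ j, ∑ r, p j r := step2
      _ = ∑ i, ∑ j, ∑ r, p j r * X i j r := step3
      _ = ∑ i, q i * (∑ j, v i j) := Finset.sum_congr rfl fun i _ => hs i
  have := Finset.sum_le_sum fun i (_ : i ∈ Finset.univ) => key i
  rw [Finset.sum_sub_distrib, Finset.sum_sub_distrib] at this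
  linarith
end

section
/- Let (p, X) be a market equilibrium for the utilities u i x = min (uinf i x) (umax i) such that Σ_i X i j r ≤ 1 for all j, r, X is non-wasteful, and X is frugal at p. Then X is Pareto-optimal: there is no allocation X' : Fin N → Fin M → Fin R → ℝ with X' i j r ≥ 0 for all i, j, r and Σ_i X' i j r ≤ 1 for all j, r such that u i (X' i) ≥ u i (X i) for every i with strict inequality u i (X' i) > u i (X i) for some i. -/
/-- Every non-wasteful and frugal market equilibrium (for the truncated utilities
`u i x = min (Σ_j min_r (x j r / a i j r)) (umax i)`) is Pareto-optimal. -/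
theorem stmt_9 (N M R : ℕ) (hN : 0 < N) (hM : 0 < M) (hR : 0 < R)
    (a : Fin N → Fin M → Fin R → ℝ) (ha : ∀ i j r, 0 < a i j r)
    (umax : Fin N → ℝ) (humax : ∀ i, 0 < umax i)
    (B : Fin N → ℝ) (hB : ∀ i, 0 < B i)
    (p : Fin M → Fin R → ℝ) (hp : ∀ j r, 0 ≤ p j r)
    (X : Fin N → Fin M → Fin R → ℝ)
    (v : Fin N → Fin M → ℝ) (hv : ∀ i j, v i j = ⨅ r, X i j r / a i j r)
    -- (p, X) is a market equilibrium for the truncated utilities: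
    (hXK : ∀ i, (∀ j r, 0 ≤ X i j r) ∧ ∑ j, ∑ r, p j r * X i j r ≤ B i)
    (hXopt : ∀ i, ∀ y : Fin M → Fin R → ℝ, (∀ j r, 0 ≤ y j r) →
      (∑ j, ∑ r, p j r * y j r ≤ B i) →
      min (∑ j, ⨅ r, y j r / a i j r) (umax i) ≤
        min (∑ j, ⨅ r, X i j r / a i j r) (umax i))
    (hclear : ∀ j r, ((∑ i, X i j r) - 1) * p j r = 0)
    -- capacity constraints:
    (hcap : ∀ j r, ∑ i, X i j r ≤ 1)
    -- X is non-wasteful: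
    (hnw1 : ∀ i j r, X i j r = v i j * a i j r)
    (hnw2 : ∀ i, ∑ j, v i j ≤ umax i)
    -- X is frugal at p:
    (hfrugal : ∀ i j, 0 < v i j →
      ∑ r, p j r * a i j r = ⨅ j', ∑ r, p j' r * a i j' r) :
    -- X is Pareto-optimal:
    ¬ ∃ X' : Fin N → Fin M → Fin R → ℝ,
      (∀ i j r, 0 ≤ X' i j r) ∧ (∀ j r, ∑ i, X' i j r ≤ 1) ∧
      (∀ i, min (∑ j, ⨅ r, X i j r / a i j r) (umax i) ≤
        min (∑ j, ⨅ r, X' i j r / a i j r) (umax i)) ∧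
      (∃ i, min (∑ j, ⨅ r, X i j r / a i j r) (umax i) <
        min (∑ j, ⨅ r, X' i j r / a i j r) (umax i)) := by
  rintro ⟨X', hX'pos, hX'cap, hle, i0, hi0⟩
  have hRne : Nonempty (Fin R) := ⟨⟨0, hR⟩⟩
  have hMne : Nonempty (Fin M) := ⟨⟨0, hM⟩⟩
  have hv0 : ∀ i j, 0 ≤ v i j := by
    intro i j
    rw [hv]
    exact le_ciInf fun r => div_nonneg ((hXK i).1 j r) (ha i j r).le
  set q : Fin N → ℝ := fun i => ⨅ j', ∑ r, p j' r * a i j' r with hq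
  have hq0 : ∀ i, 0 ≤ q i := fun i =>
    le_ciInf fun j => Finset.sum_nonneg fun r _ => mul_nonneg (hp j r) (ha i j r).le
  have hqle : ∀ i j, q i ≤ ∑ r, p j r * a i j r := fun i j =>
    ciInf_le (Set.Finite.bddBelow (Set.finite_range _)) j
  have hinf : ∀ i j, (⨅ r, X i j r / a i j r) = v i j := by
    intro i j
    have h : ∀ r : Fin R, X i j r / a i j r = v i j := fun r => by
      rw [hnw1, mul_div_assoc, div_self (ha i j r).ne', mul_one]
    simp only [h, ciInf_const]
  have huX : ∀ i, min (∑ j, ⨅ r, X i j r / a i j r) (umax i) = ∑ j, v i j := by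
    intro i
    simp only [hinf]
    exact min_eq_left (hnw2 i)
  have hcost : ∀ i, ∑ j, ∑ r, p j r * X i j r = q i * ∑ j, v i j := by
    intro i
    rw [Finset.mul_sum]
    refine Finset.sum_congr rfl fun j _ => ?_
    rcases eq_or_lt_of_le (hv0 i j) with h | h
    · simp [hnw1, ← h]
    · have hf := hfrugal i j h
      calc ∑ r, p j r * X i j r = v i j * ∑ r, p j r * a i j r := by
            rw [Finset.mul_sum]
            exact Finset.sum_congr rfl fun r _ => by rw [hnw1]; ring
        _ = q i * v i j := by rw [hf]; ring
  have hcost' : ∀ i, q i * min (∑ j, ⨅ r, X' i j r / a i j r) (umax i)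
      ≤ ∑ j, ∑ r, p j r * X' i j r := by
    intro i
    have hv' : ∀ j, 0 ≤ ⨅ r, X' i j r / a i j r := fun j =>
      le_ciInf fun r => div_nonneg (hX'pos i j r) (ha i j r).le
    have step : ∀ j, q i * (⨅ r, X' i j r / a i j r) ≤ ∑ r, p j r * X' i j r := by
      intro j
      have h1 : (⨅ r, X' i j r / a i j r) * ∑ r, p j r * a i j r
          ≤ ∑ r, p j r * X' i j r := by
        rw [Finset.mul_sum]
        refine Finset.sum_le_sum fun r _ => ?_
        have h2 : (⨅ r', X' i j r' / a i j r') ≤ X' i j r / a i j r :=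
          ciInf_le (Set.Finite.bddBelow (Set.finite_range _)) r
        calc (⨅ r', X' i j r' / a i j r') * (p j r * a i j r)
            ≤ (X' i j r / a i j r) * (p j r * a i j r) :=
              mul_le_mul_of_nonneg_right h2 (mul_nonneg (hp j r) (ha i j r).le)
          _ = p j r * X' i j r := by
              field_simp [(ha i j r).ne']
      calc q i * (⨅ r, X' i j r / a i j r)
          ≤ (∑ r, p j r * a i j r) * (⨅ r, X' i j r / a i j r) :=
            mul_le_mul_of_nonneg_right (hqle i j) (hv' j)
        _ = (⨅ r, X' i j r / a i j r) * ∑ r, p j r * a i j r := mul_comm _ _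
        _ ≤ _ := h1
    calc q i * min (∑ j, ⨅ r, X' i j r / a i j r) (umax i)
        ≤ q i * ∑ j, ⨅ r, X' i j r / a i j r :=
          mul_le_mul_of_nonneg_left (min_le_left _ _) (hq0 i)
      _ = ∑ j, q i * (⨅ r, X' i j r / a i j r) := Finset.mul_sum _ _ _
      _ ≤ _ := Finset.sum_le_sum fun j _ => step j
  have hweak : ∀ i, ∑ j, ∑ r, p j r * X i j r ≤ ∑ j, ∑ r, p j r * X' i j r := by
    intro i
    calc ∑ j, ∑ r, p j r * X i j r = q i * ∑ j, v i j := hcost i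
      _ = q i * min (∑ j, ⨅ r, X i j r / a i j r) (umax i) := by rw [huX i]
      _ ≤ q i * min (∑ j, ⨅ r, X' i j r / a i j r) (umax i) :=
          mul_le_mul_of_nonneg_left (hle i) (hq0 i)
      _ ≤ _ := hcost' i
  have hstrict : B i0 < ∑ j, ∑ r, p j r * X' i0 j r := by
    by_contra h
    push_neg at h
    exact absurd (hXopt i0 (X' i0) (hX'pos i0) h) (not_le.mpr hi0)
  have hstrict2 : ∑ j, ∑ r, p j r * X i0 j r < ∑ j, ∑ r, p j r * X' i0 j r :=
    lt_of_le_of_lt (hXK i0).2 hstrict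
  have hsum : ∑ i, ∑ j, ∑ r, p j r * X i j r < ∑ i, ∑ j, ∑ r, p j r * X' i j r :=
    Finset.sum_lt_sum (fun i _ => hweak i) ⟨i0, Finset.mem_univ i0, hstrict2⟩
  have key : ∀ Y : Fin N → Fin M → Fin R → ℝ,
      ∑ i, ∑ j, ∑ r, p j r * Y i j r = ∑ j, ∑ r, p j r * ∑ i, Y i j r := by
    intro Y
    rw [Finset.sum_comm]
    refine Finset.sum_congr rfl fun j _ => ?_
    rw [Finset.sum_comm]
    refine Finset.sum_congr rfl fun r _ => ?_
    rw [Finset.mul_sum]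
  have hL : ∑ i, ∑ j, ∑ r, p j r * X i j r = ∑ j, ∑ r, p j r := by
    rw [key]
    refine Finset.sum_congr rfl fun j _ => Finset.sum_congr rfl fun r _ => ?_
    linear_combination hclear j r
  have hRb : ∑ i, ∑ j, ∑ r, p j r * X' i j r ≤ ∑ j, ∑ r, p j r := by
    rw [key]
    exact Finset.sum_le_sum fun j _ => Finset.sum_le_sum fun r _ =>
      mul_le_of_le_one_right (hp j r) (hX'cap j r)
  rw [hL] at hsum
  linarith
end

section
/- Let (p, X) be a market equilibrium for the utilities u i x = min (uinf i x) (umax i). Define the proportional-sharing allocation x̂ by x̂ i j r = B i / (Σ_{i'} B i') for all i, j, r. Then the equilibrium satisfies the sharing-incentive property: u i (X i) ≥ u i (x̂ i) for every i. -/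
/-- A market equilibrium allocation for the truncated utilities
`u i x = min (Σ_j min_r (x j r / a i j r)) (umax i)` satisfies the sharing-incentive
property: every service weakly prefers its equilibrium bundle to the
proportional-sharing bundle `x̂ i j r = B i / Σ_{i'} B i'`. -/
theorem stmt_11 (N M R : ℕ) (hN : 0 < N) (hM : 0 < M) (hR : 0 < R)
    (a : Fin N → Fin M → Fin R → ℝ) (ha : ∀ i j r, 0 < a i j r)
    (umax : Fin N → ℝ) (humax : ∀ i, 0 < umax i)
    (B : Fin N → ℝ) (hB : ∀ i, 0 < B i)
    (p : Fin M → Fin R → ℝ) (hp : ∀ j r, 0 ≤ p j r)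
    (X : Fin N → Fin M → Fin R → ℝ)
    -- (p, X) is a market equilibrium for the truncated utilities:
    (hXK : ∀ i, (∀ j r, 0 ≤ X i j r) ∧ ∑ j, ∑ r, p j r * X i j r ≤ B i)
    (hXopt : ∀ i, ∀ y : Fin M → Fin R → ℝ, (∀ j r, 0 ≤ y j r) →
      (∑ j, ∑ r, p j r * y j r ≤ B i) →
      min (∑ j, ⨅ r, y j r / a i j r) (umax i) ≤
        min (∑ j, ⨅ r, X i j r / a i j r) (umax i))
    (hclear : ∀ j r, ((∑ i, X i j r) - 1) * p j r = 0)
    -- the proportional-sharing allocation: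
    (xhat : Fin N → Fin M → Fin R → ℝ)
    (hxhat : ∀ i j r, xhat i j r = B i / ∑ i', B i') :
    -- sharing-incentive:
    ∀ i, min (∑ j, ⨅ r, xhat i j r / a i j r) (umax i) ≤
      min (∑ j, ⨅ r, X i j r / a i j r) (umax i) := by
  intro i
  have hS : (0:ℝ) < ∑ i', B i' :=
    Finset.sum_pos (fun i' _ => hB i') (Finset.univ_nonempty_iff.mpr ⟨⟨0, hN⟩⟩)
  -- price mass bounded by total budget
  have hpsum : ∑ j, ∑ r, p j r ≤ ∑ i', B i' := by
    have h1 : ∑ j, ∑ r, p j r = ∑ j, ∑ r, p j r * ∑ i', X i' j r := by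
      refine Finset.sum_congr rfl fun j _ => Finset.sum_congr rfl fun r _ => ?_
      have := hclear j r
      nlinarith [this]
    rw [h1]
    have h2 : ∑ j, ∑ r, p j r * ∑ i', X i' j r
        = ∑ i', ∑ j, ∑ r, p j r * X i' j r := by
      calc ∑ j, ∑ r, p j r * ∑ i', X i' j r
          = ∑ j, ∑ i', ∑ r, p j r * X i' j r := by
            refine Finset.sum_congr rfl fun j _ => ?_
            simp_rw [Finset.mul_sum]
            exact Finset.sum_comm
        _ = ∑ i', ∑ j, ∑ r, p j r * X i' j r := Finset.sum_comm
    rw [h2]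
    exact Finset.sum_le_sum fun i' _ => (hXK i').2
  apply hXopt i
  · intro j r
    rw [hxhat]
    exact div_nonneg (hB i).le hS.le
  · have : ∑ j, ∑ r, p j r * xhat i j r = (∑ j, ∑ r, p j r) * (B i / ∑ i', B i') := by
      rw [Finset.sum_mul]
      refine Finset.sum_congr rfl fun j _ => ?_
      rw [Finset.sum_mul]
      refine Finset.sum_congr rfl fun r _ => ?_
      rw [hxhat]
    rw [this]
    rw [div_eq_mul_inv, ← mul_assoc]
    calc (∑ j, ∑ r, p j r) * B i * (∑ i', B i')⁻¹
        ≤ (∑ i', B i') * B i * (∑ i', B i')⁻¹ := by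
          apply mul_le_mul_of_nonneg_right _ (by positivity)
          exact mul_le_mul_of_nonneg_right hpsum (hB i).le
      _ = B i := by field_simp
end

section
/- Let (p, X) be a market equilibrium for the utilities u i x = min (uinf i x) (umax i). Let C denote the bundle of all available resources, C j r = 1 for all j, r. Then the equilibrium satisfies the proportionality property: u i (X i) ≥ (B i / Σ_{i'} B i') * u i C for every i. -/
/-- A market equilibrium allocation for the truncated utilities
`u i x = min (Σ_j min_r (x j r / a i j r)) (umax i)` satisfies the proportionality
property: `u i (X i) ≥ (B i / Σ_{i'} B i') * u i C`, where `C j r = 1`. -/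
theorem stmt_12 (N M R : ℕ) (hN : 0 < N) (hM : 0 < M) (hR : 0 < R)
    (a : Fin N → Fin M → Fin R → ℝ) (ha : ∀ i j r, 0 < a i j r)
    (umax : Fin N → ℝ) (humax : ∀ i, 0 < umax i)
    (B : Fin N → ℝ) (hB : ∀ i, 0 < B i)
    (p : Fin M → Fin R → ℝ) (hp : ∀ j r, 0 ≤ p j r)
    (X : Fin N → Fin M → Fin R → ℝ)
    -- (p, X) is a market equilibrium for the truncated utilities:
    (hXK : ∀ i, (∀ j r, 0 ≤ X i j r) ∧ ∑ j, ∑ r, p j r * X i j r ≤ B i)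
    (hXopt : ∀ i, ∀ y : Fin M → Fin R → ℝ, (∀ j r, 0 ≤ y j r) →
      (∑ j, ∑ r, p j r * y j r ≤ B i) →
      min (∑ j, ⨅ r, y j r / a i j r) (umax i) ≤
        min (∑ j, ⨅ r, X i j r / a i j r) (umax i))
    (hclear : ∀ j r, ((∑ i, X i j r) - 1) * p j r = 0)
    -- the bundle of all available resources:
    (C : Fin M → Fin R → ℝ) (hC : ∀ j r, C j r = 1) :
    -- proportionality:
    ∀ i, (B i / ∑ i', B i') * min (∑ j, ⨅ r, C j r / a i j r) (umax i) ≤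
      min (∑ j, ⨅ r, X i j r / a i j r) (umax i) := by
  intro i
  haveI : Nonempty (Fin R) := ⟨⟨0, hR⟩⟩
  have hSB : 0 < ∑ i', B i' := Finset.sum_pos (fun i' _ => hB i') ⟨⟨0, hN⟩, Finset.mem_univ _⟩
  set t : ℝ := B i / ∑ i', B i' with ht
  have ht0 : 0 < t := div_pos (hB i) hSB
  have ht1 : t ≤ 1 := (div_le_one hSB).mpr
    (Finset.single_le_sum (fun i' _ => (hB i').le) (Finset.mem_univ i))
  set y : Fin M → Fin R → ℝ := fun j r => t * C j r with hy
  have hynn : ∀ j r, 0 ≤ y j r := fun j r => by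
    simp only [hy, hC]; simpa using ht0.le
  -- cost of y ≤ B i
  have hpeq : ∀ j r, p j r = ∑ i', X i' j r * p j r := by
    intro j r
    have h := hclear j r
    have h' : (∑ i', X i' j r) * p j r = p j r := by ring_nf; ring_nf at h; linarith
    rw [← Finset.sum_mul, h']
  have hpsum : ∑ j, ∑ r, p j r ≤ ∑ i', B i' := by
    calc ∑ j, ∑ r, p j r = ∑ j, ∑ r, ∑ i', X i' j r * p j r := by
          refine Finset.sum_congr rfl fun j _ => Finset.sum_congr rfl fun r _ => hpeq j r
      _ = ∑ i', ∑ j, ∑ r, p j r * X i' j r := by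
          simp_rw [mul_comm (X _ _ _) (p _ _)]
          rw [show (∑ j, ∑ r, ∑ i', p j r * X i' j r)
              = ∑ j, ∑ i', ∑ r, p j r * X i' j r from
            Finset.sum_congr rfl fun j _ => Finset.sum_comm, Finset.sum_comm]
      _ ≤ ∑ i', B i' := Finset.sum_le_sum fun i' _ => (hXK i').2
  have hcost : ∑ j, ∑ r, p j r * y j r ≤ B i := by
    have : ∑ j, ∑ r, p j r * y j r = t * ∑ j, ∑ r, p j r := by
      simp only [hy, hC, mul_one, Finset.mul_sum]
      exact Finset.sum_congr rfl fun j _ => Finset.sum_congr rfl fun r _ => mul_comm _ _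
    rw [this]
    calc t * ∑ j, ∑ r, p j r ≤ t * ∑ i', B i' := by
          exact mul_le_mul_of_nonneg_left hpsum ht0.le
      _ = B i := div_mul_cancel₀ _ hSB.ne'
  -- utility of y equals t times utility of C (before truncation)
  have huy : ∑ j, ⨅ r, y j r / a i j r = t * ∑ j, ⨅ r, C j r / a i j r := by
    rw [Finset.mul_sum]
    refine Finset.sum_congr rfl fun j _ => ?_
    rw [Real.mul_iInf_of_nonneg ht0.le]
    exact iInf_congr fun r => mul_div_assoc t (C j r) (a i j r)
  have hCpos : 0 < ∑ j, ⨅ r, C j r / a i j r := by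
    refine Finset.sum_pos (fun j _ => ?_) ⟨⟨0, hM⟩, Finset.mem_univ _⟩
    obtain ⟨r0, hr0⟩ := exists_eq_ciInf_of_finite (f := fun r => C j r / a i j r)
    rw [← hr0, hC]
    exact div_pos one_pos (ha i j r0)
  have hopt := hXopt i y hynn hcost
  rw [huy] at hopt
  refine le_trans ?_ hopt
  set S := ∑ j, ⨅ r, C j r / a i j r
  have hmin0 : 0 ≤ min S (umax i) := le_min hCpos.le (humax i).le
  refine le_min ?_ ?_
  · exact mul_le_mul_of_nonneg_left (min_le_left _ _) ht0.le
  · calc t * min S (umax i) ≤ 1 * umax i :=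
        mul_le_mul ht1 (min_le_right _ _) hmin0 zero_le_one
      _ = umax i := one_mul _
end

section
/- Fix a service with budget B > 0, utility limit umax > 0, base demands a : Fin M → Fin R → ℝ with a j r > 0, and prices p : Fin M → Fin R → ℝ with p j r ≥ 0. Suppose x belongs to the budget set K = {y | y j r ≥ 0 for all j, r and Σ_{j,r} p j r * y j r ≤ B}, suppose x maximizes the truncated utility over K (i.e. min (uinf x) umax ≥ min (uinf y) umax for all y ∈ K), suppose uinf x > 0, and suppose the budget is not exhausted: Σ_{j,r} p j r * x j r < B. Then uinf x ≥ umax; that is, at a utility-maximizing bundle a service either spends its full budget or attains its utility limit. -/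
/-- At a utility-maximizing bundle (for the truncated utility
`u x = min (Σ_j min_r (x j r / a j r)) umax`), a service either spends its full
budget or attains its utility limit: if the uncapped utility is positive and the
budget is not exhausted, then the utility limit is attained. -/
theorem stmt_14 (M R : ℕ) (hM : 0 < M) (hR : 0 < R)
    (B : ℝ) (hB : 0 < B) (umax : ℝ) (humax : 0 < umax)
    (a : Fin M → Fin R → ℝ) (ha : ∀ j r, 0 < a j r)
    (p : Fin M → Fin R → ℝ) (hp : ∀ j r, 0 ≤ p j r)
    (x : Fin M → Fin R → ℝ)
    (hx_nonneg : ∀ j r, 0 ≤ x j r)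
    (hx_budget : ∑ j, ∑ r, p j r * x j r ≤ B)
    (hopt : ∀ y : Fin M → Fin R → ℝ, (∀ j r, 0 ≤ y j r) →
      (∑ j, ∑ r, p j r * y j r ≤ B) →
      min (∑ j, ⨅ r, y j r / a j r) umax ≤ min (∑ j, ⨅ r, x j r / a j r) umax)
    (hpos : 0 < ∑ j, ⨅ r, x j r / a j r)
    (hslack : ∑ j, ∑ r, p j r * x j r < B) :
    umax ≤ ∑ j, ⨅ r, x j r / a j r := by
  haveI : Nonempty (Fin R) := ⟨⟨0, hR⟩⟩
  by_contra h
  push_neg at h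
  set u := ∑ j, ⨅ r, x j r / a j r with hu
  set S := ∑ j, ∑ r, p j r * x j r with hS
  have hS0 : 0 ≤ S := Finset.sum_nonneg fun j _ =>
    Finset.sum_nonneg fun r _ => mul_nonneg (hp j r) (hx_nonneg j r)
  set t : ℝ := if S = 0 then 2 else B / S with ht
  have ht1 : 1 < t := by
    rw [ht]; split_ifs with h0
    · norm_num
    · rw [lt_div_iff₀ (lt_of_le_of_ne hS0 (Ne.symm h0))]
      simpa using hslack
  have htS : t * S ≤ B := by
    rw [ht]; split_ifs with h0
    · simp [h0]; linarith
    · rw [div_mul_eq_mul_div, mul_div_assoc,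
        div_self h0, mul_one]
  have ht0 : 0 ≤ t := by linarith
  have key := hopt (fun j r => t * x j r)
    (fun j r => mul_nonneg ht0 (hx_nonneg j r))
    (by
      calc ∑ j, ∑ r, p j r * (t * x j r) = t * S := by
            rw [hS, Finset.mul_sum]
            refine Finset.sum_congr rfl fun j _ => ?_
            rw [Finset.mul_sum]
            exact Finset.sum_congr rfl fun r _ => by ring
        _ ≤ B := htS)
  have hiInf : ∀ j : Fin M, (⨅ r, t * x j r / a j r) = t * ⨅ r, x j r / a j r := by
    intro j
    rw [Real.mul_iInf_of_nonneg ht0]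
    exact iInf_congr fun r => mul_div_assoc t _ _
  simp only [hiInf, ← Finset.mul_sum] at key
  rw [← hu, min_eq_left h.le] at key
  have : u < min (t * u) umax := lt_min (by nlinarith) h
  linarith [le_of_lt this, key]
end
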